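/- Let π be a continuous piecewise linear minimal valid function with the following property: if π admits a nonzero effective perturbation, then π admits a nonzero piecewise linear effective perturbation. Then the following are equivalent: (1) π is extreme; (2) π is a facet; (3) π is a weak facet. -/

import Mathlib

/-- A finite-support function `y : ℝ → ℕ` is feasible if `∑ r, r·y(r) − f ∈ ℤ`. -/
def Feasible (f : ℝ) (y : ℝ →₀ ℕ) : Prop :=
  ∃ z : ℤ, (∑ r ∈ y.support, r * (y r : ℝ)) - f = (z : ℝ)

/-- `π` is a valid function: nonnegative, and `∑ r, π(r)·y(r) ≥ 1` for every feasible `y`. -/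
def Valid (f : ℝ) (π : ℝ → ℝ) : Prop :=
  (∀ x, 0 ≤ π x) ∧
    ∀ y : ℝ →₀ ℕ, Feasible f y → 1 ≤ ∑ r ∈ y.support, π r * (y r : ℝ)

/-- A valid function is minimal if no other valid function is pointwise ≤ it. -/
def MinimalValid (f : ℝ) (π : ℝ → ℝ) : Prop :=
  Valid f π ∧ ¬ ∃ π' : ℝ → ℝ, Valid f π' ∧ (∀ x, π' x ≤ π x) ∧ π' ≠ π

/-- `P(π)`: the set of feasible `y` with `∑ r, π(r)·y(r) = 1`. -/
def Pset (f : ℝ) (π : ℝ → ℝ) : Set (ℝ →₀ ℕ) :=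
  {y | Feasible f y ∧ ∑ r ∈ y.support, π r * (y r : ℝ) = 1}

/-- `E(π) = {(x,y) : π(x) + π(y) = π(x+y)}`. -/
def Eset (π : ℝ → ℝ) : Set (ℝ × ℝ) :=
  {p | π p.1 + π p.2 = π (p.1 + p.2)}

/-- A valid function `π` is a facet if every valid `π'` with `P(π) ⊆ P(π')` equals `π`. -/
def IsFacet (f : ℝ) (π : ℝ → ℝ) : Prop :=
  Valid f π ∧ ∀ π' : ℝ → ℝ, Valid f π' → Pset f π ⊆ Pset f π' → π' = π

/-- A valid function `π` is a weak facet if every valid `π'` with `P(π) ⊆ P(π')`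
has `P(π) = P(π')`. -/
def IsWeakFacet (f : ℝ) (π : ℝ → ℝ) : Prop :=
  Valid f π ∧ ∀ π' : ℝ → ℝ, Valid f π' → Pset f π ⊆ Pset f π' → Pset f π = Pset f π'

/-- A valid function `π` is extreme if whenever `π = (π¹ + π²)/2` with `π¹, π²` valid,
then `π¹ = π² = π`. -/
def ExtremeFunc (f : ℝ) (π : ℝ → ℝ) : Prop :=
  Valid f π ∧ ∀ π₁ π₂ : ℝ → ℝ, Valid f π₁ → Valid f π₂ →
    (∀ x, π x = (π₁ x + π₂ x) / 2) → π₁ = π ∧ π₂ = π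

/-- `π` is piecewise linear: there is a closed, discrete set `B ⊆ ℝ` of breakpoints
such that `π` is affine on each connected component of `ℝ \ B`. -/
def PiecewiseLinear (π : ℝ → ℝ) : Prop :=
  ∃ B : Set ℝ, IsClosed B ∧
    (∀ x ∈ B, ∃ ε > (0 : ℝ), ∀ y ∈ B, |y - x| < ε → y = x) ∧
    (∀ x ∉ B, ∃ a b : ℝ, ∀ z ∈ connectedComponentIn Bᶜ x, π z = a * z + b)

/-- `π` is continuous piecewise linear. -/
def ContPiecewiseLinear (π : ℝ → ℝ) : Prop :=
  PiecewiseLinear π ∧ Continuous π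

/-- `π̃` is an effective perturbation of `π`: for some `ε > 0`,
both `π + ε·π̃` and `π − ε·π̃` are minimal valid. -/
def EffPerturb (f : ℝ) (π πt : ℝ → ℝ) : Prop :=
  ∃ ε > (0 : ℝ), MinimalValid f (fun x => π x + ε * πt x) ∧
    MinimalValid f (fun x => π x - ε * πt x)


/-!
Facet ⇒ extreme and facet ⇒ weak facet are direct. For extreme ⇒ facet, let `ρ` be valid with
`P(π) ⊆ P(ρ)`. Then `ρ` is minimal, `E(π) ⊆ E(ρ)` and the zeros of `π` are zeros of `ρ`, and `ρ` is
Lipschitz. Since `π` is continuous piecewise linear, `π` and `Δπ(a, b) = π a + π b - π (a + b)` are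
affine on the finitely many cells of its complex over `[0, 1]` and `[0, 1]²`, so a Hoffman-type
bound there puts a zero of `π` (a point of `E(π)`) within `C · π x` (`C · Δπ(a, b)`). This gives
`ρ ≤ C π` and `Δρ ≤ C Δπ`, so `(1 + ε) π - ε ρ` is valid for small `ε > 0`, and `π` is the midpoint
of it and `(1 - ε) π + ε ρ`.

For weak facet ⇒ extreme, a nontrivial decomposition of `π` is an effective perturbation, so by
hypothesis there is a piecewise linear one `π̃`; it vanishes on `P(π)`. Let `θ = π + t π̃` with `t`
maximal such that `θ` is valid. Then `P(π) ⊆ P(θ)`, and `P(θ) = P(π)` is impossible: the step above,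
applied to `θ` and `π`, would make `π + (1 + ε) t π̃` valid.
-/

open Set Filter

def wsum (g : ℝ → ℝ) (y : ℝ →₀ ℕ) : ℝ := ∑ r ∈ y.support, g r * y r

def delta (g : ℝ → ℝ) (a b : ℝ) : ℝ := g a + g b - g (a + b)

section WeightedSum

variable {g : ℝ → ℝ} {y : ℝ →₀ ℕ}

lemma wsum_eq_sum (g : ℝ → ℝ) (y : ℝ →₀ ℕ) : wsum g y = y.sum fun r n => g r * n := rfl

@[simp]
lemma wsum_add (g : ℝ → ℝ) (y₁ y₂ : ℝ →₀ ℕ) : wsum g (y₁ + y₂) = wsum g y₁ + wsum g y₂ := by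
  simp only [wsum_eq_sum]
  exact Finsupp.sum_add_index' (fun _ => by simp) fun _ _ _ => by push_cast; ring

@[simp]
lemma wsum_single (g : ℝ → ℝ) (a : ℝ) (n : ℕ) : wsum g (Finsupp.single a n) = g a * n := by
  simp only [wsum_eq_sum]
  exact Finsupp.sum_single_index (by simp)

lemma wsum_linear (a b : ℝ) (g g' : ℝ → ℝ) (y : ℝ →₀ ℕ) :
    wsum (fun x => a * g x + b * g' x) y = a * wsum g y + b * wsum g' y := by
  simp only [wsum, add_mul, Finset.sum_add_distrib, Finset.mul_sum, mul_assoc]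

lemma wsum_add_mul (g g' : ℝ → ℝ) (t : ℝ) (y : ℝ →₀ ℕ) :
    wsum (fun x => g x + t * g' x) y = wsum g y + t * wsum g' y := by
  simpa using wsum_linear 1 t g g' y

lemma wsum_eq_add_erase (g : ℝ → ℝ) (a : ℝ) (y : ℝ →₀ ℕ) :
    wsum g y = g a * y a + wsum g (y.erase a) := by
  conv_lhs => rw [← Finsupp.single_add_erase a y]
  simp

lemma wsum_update (g : ℝ → ℝ) (a v : ℝ) (y : ℝ →₀ ℕ) :
    wsum (Function.update g a v) y = v * y a + wsum g (y.erase a) := by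
  rw [wsum_eq_add_erase _ a, Function.update_self]
  congr 1
  refine Finset.sum_congr rfl fun r hr => ?_
  rw [Function.update_of_ne (by rintro rfl; simp at hr)]

lemma feasible_iff {f : ℝ} : Feasible f y ↔ ∃ z : ℤ, wsum id y = f + z :=
  exists_congr fun z => by rw [sub_eq_iff_eq_add']; rfl

lemma feasible_of_wsum_eq {f : ℝ} (h : wsum id y = f) : Feasible f y :=
  feasible_iff.2 ⟨0, by simpa⟩

lemma apply_nat_mul_le (h0 : g 0 = 0) (hsub : ∀ a b, g (a + b) ≤ g a + g b) (n : ℕ) (x : ℝ) :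
    g (n * x) ≤ n * g x := by
  simpa using Finset.le_sum_of_subadditive g h0.le hsub (Finset.range n) fun _ => x

lemma apply_wsum_id_le (h0 : g 0 = 0) (hsub : ∀ a b, g (a + b) ≤ g a + g b) (y : ℝ →₀ ℕ) :
    g (wsum id y) ≤ wsum g y :=
  (Finset.le_sum_of_subadditive g h0.le hsub _ _).trans <| Finset.sum_le_sum fun r _ => by
    simpa [mul_comm] using apply_nat_mul_le h0 hsub (y r) r

end WeightedSum

lemma delta_nonneg {g : ℝ → ℝ} (hsub : ∀ a b, g (a + b) ≤ g a + g b) (a b : ℝ) :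
    0 ≤ delta g a b :=
  sub_nonneg.2 (hsub a b)

lemma mem_Eset_iff {g : ℝ → ℝ} {a b : ℝ} : (a, b) ∈ Eset g ↔ delta g a b = 0 :=
  sub_eq_zero.symm

section Minimal

variable {f : ℝ} {ρ θ : ℝ → ℝ}

lemma Valid.one_le_wsum (hρ : Valid f ρ) {y : ℝ →₀ ℕ} (hy : Feasible f y) : 1 ≤ wsum ρ y :=
  hρ.2 y hy

lemma Valid.one_le_add (hρ : Valid f ρ) (x : ℝ) : 1 ≤ ρ x + ρ (f - x) := by
  simpa using hρ.one_le_wsum (feasible_of_wsum_eq (y := .single x 1 + .single (f - x) 1) (by simp))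

lemma Feasible.of_wsum_id_eq_sub {y y' : ℝ →₀ ℕ} (hy : Feasible f y) (z : ℤ)
    (h : wsum id y' = wsum id y - z) : Feasible f y' := by
  obtain ⟨w, hw⟩ := feasible_iff.1 hy
  exact feasible_iff.2 ⟨w - z, by push_cast; linarith⟩

lemma valid_update {x v : ℝ} (hnn : ∀ u, 0 ≤ ρ u) (hv : 0 ≤ v)
    (h : ∀ y, Feasible f y → 1 ≤ v * y x + wsum ρ (y.erase x)) :
    Valid f (Function.update ρ x v) := by
  refine ⟨fun u => ?_, fun y hy => (h y hy).trans_eq (wsum_update ρ x v y).symm⟩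
  rcases eq_or_ne u x with rfl | hu
  · simpa
  · simpa [hu] using hnn u

lemma valid_of_subadditive {g : ℝ → ℝ} (hnn : ∀ x, 0 ≤ g x) (h0 : g 0 = 0)
    (hsub : ∀ a b, g (a + b) ≤ g a + g b) (hf : ∀ z : ℤ, 1 ≤ g (f + z)) : Valid f g := by
  refine ⟨hnn, fun y hy => ?_⟩
  obtain ⟨z, hz⟩ := feasible_iff.1 hy
  exact (hf z).trans (hz ▸ apply_wsum_id_le h0 hsub y)

namespace MinimalValid

lemma eq_of_le (hρ : MinimalValid f ρ) (hθ : Valid f θ) (hle : ∀ x, θ x ≤ ρ x) : θ = ρ := by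
  by_contra h
  exact hρ.2 ⟨θ, hθ, hle, h⟩

lemma le_of_valid_update (hρ : MinimalValid f ρ) {x v : ℝ}
    (hv : Valid f (Function.update ρ x v)) : ρ x ≤ v := by
  by_contra! h
  have hle : ∀ u, Function.update ρ x v u ≤ ρ u := fun u => by
    rcases eq_or_ne u x with rfl | hu
    · simpa using h.le
    · simp [hu]
  have := congrFun (hρ.eq_of_le hv hle) x
  simp only [Function.update_self] at this
  linarith

lemma apply_intCast (hρ : MinimalValid f ρ) (z : ℤ) : ρ z = 0 := by
  refine le_antisymm (hρ.le_of_valid_update (valid_update hρ.1.1 le_rfl fun y hy => ?_))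
    (hρ.1.1 _)
  rw [zero_mul, zero_add]
  refine hρ.1.one_le_wsum (hy.of_wsum_id_eq_sub (z * y z) ?_)
  rw [wsum_eq_add_erase id z y]
  push_cast
  simp only [id]
  ring

lemma apply_zero (hρ : MinimalValid f ρ) : ρ 0 = 0 := by
  simpa using hρ.apply_intCast 0

lemma subadditive (hρ : MinimalValid f ρ) (a b : ℝ) : ρ (a + b) ≤ ρ a + ρ b := by
  refine hρ.le_of_valid_update
    (valid_update hρ.1.1 (add_nonneg (hρ.1.1 a) (hρ.1.1 b)) fun y hy => ?_)
  -- splitting every copy of `a + b` into `a` and `b` keeps `y` feasible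
  set y' := y.erase (a + b) + .single a (y (a + b)) + .single b (y (a + b))
  have hy' : Feasible f y' :=
    hy.of_wsum_id_eq_sub 0 (by
      simp only [y', wsum_add, wsum_single, id_eq, wsum_eq_add_erase id (a + b) y,
        Int.cast_zero, sub_zero]
      ring)
  have := hρ.1.one_le_wsum hy'
  simp only [y', wsum_add, wsum_single] at this
  linarith

lemma periodic (hρ : MinimalValid f ρ) (x : ℝ) (z : ℤ) : ρ (x + z) = ρ x := by
  have h₁ := hρ.subadditive x z
  have h₂ := hρ.subadditive (x + z) ((-z : ℤ) : ℝ)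
  rw [hρ.apply_intCast] at h₁ h₂
  push_cast at h₂
  rw [add_neg_cancel_right] at h₂
  linarith

lemma apply_fract (hρ : MinimalValid f ρ) (x : ℝ) : ρ (Int.fract x) = ρ x := by
  rw [← hρ.periodic _ ⌊x⌋, Int.fract_add_floor]

lemma delta_fract (hρ : MinimalValid f ρ) (a b : ℝ) :
    delta ρ (Int.fract a) (Int.fract b) = delta ρ a b := by
  have h : a + b = Int.fract a + Int.fract b + ((⌊a⌋ + ⌊b⌋ : ℤ) : ℝ) := by
    push_cast
    linarith [Int.fract_add_floor a, Int.fract_add_floor b]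
  simp only [delta]
  rw [h, hρ.periodic, hρ.apply_fract, hρ.apply_fract]

lemma nat_mul_add_le_wsum (hρ : MinimalValid f ρ) {y : ℝ →₀ ℕ} (hy : Feasible f y) (x : ℝ) :
    y x * ρ x + ρ (f - y x * x) ≤ wsum ρ y := by
  obtain ⟨z, hz⟩ := feasible_iff.1 hy
  have hrest : wsum id (y.erase x) = f - y x * x + z := by
    have := wsum_eq_add_erase id x y
    simp only [id] at this
    linarith
  have := apply_wsum_id_le hρ.apply_zero hρ.subadditive (y.erase x)
  rw [hrest, hρ.periodic] at this
  rw [wsum_eq_add_erase ρ x]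
  linarith

lemma add_le_one_of_pos (hρ : MinimalValid f ρ) {x : ℝ} (hx : 0 < ρ x) :
    ρ x + ρ (f - x) ≤ 1 := by
  -- lowering `ρ x` by `c` breaks validity; a witness uses `x` fewer than `2 / ρ x` times
  have key : ∀ c, 0 < c → c ≤ ρ x / 2 → ρ x + ρ (f - x) < 1 + 2 * c / ρ x := by
    intro c hc hcx
    obtain ⟨y, hy, hlt⟩ : ∃ y, Feasible f y ∧ wsum ρ y < 1 + c * y x := by
      by_contra! h
      have := hρ.le_of_valid_update (v := ρ x - c) <| valid_update hρ.1.1 (by linarith)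
        fun y hy => by have := h y hy; rw [wsum_eq_add_erase ρ x] at this; linarith
      linarith
    have hlow := hρ.nat_mul_add_le_wsum hy x
    obtain ⟨n, hn⟩ : ∃ n : ℕ, y x = n + 1 := by
      refine Nat.exists_eq_add_one.2 (Nat.pos_of_ne_zero fun h0 => ?_)
      have := hρ.1.one_le_wsum hy
      rw [h0, Nat.cast_zero, mul_zero, add_zero] at hlt
      linarith
    rw [hn] at hlow hlt
    push_cast at hlow hlt
    have hchain : ρ (f - x) ≤ ρ (f - (n + 1) * x) + n * ρ x := by
      have := hρ.subadditive (f - (n + 1) * x) (n * x)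
      rw [show f - (n + 1) * x + n * x = f - x by ring] at this
      linarith [apply_nat_mul_le hρ.apply_zero hρ.subadditive n x]
    have hρ0 := hρ.1.1 (f - (n + 1) * x)
    have hnx : (n + 1) * ρ x < 2 := by nlinarith
    have : c * (n + 1) ≤ 2 * c / ρ x := by
      rw [le_div_iff₀ hx]; nlinarith
    linarith
  refine le_of_forall_pos_lt_add fun η hη => ?_
  have hc : 0 < min (ρ x / 2) (η * ρ x / 2) := by positivity
  refine (key _ hc (min_le_left _ _)).trans_le ?_
  have : 2 * min (ρ x / 2) (η * ρ x / 2) / ρ x ≤ η := by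
    rw [div_le_iff₀ hx]; linarith [min_le_right (ρ x / 2) (η * ρ x / 2)]
  linarith

lemma symm (hρ : MinimalValid f ρ) (x : ℝ) : ρ x + ρ (f - x) = 1 := by
  refine le_antisymm ?_ (hρ.1.one_le_add x)
  rcases (hρ.1.1 x).eq_or_lt with h | h
  · have hpos : 0 < ρ (f - x) := by linarith [hρ.1.one_le_add x]
    simpa [add_comm] using hρ.add_le_one_of_pos hpos
  · exact hρ.add_le_one_of_pos h

lemma le_one (hρ : MinimalValid f ρ) (x : ℝ) : ρ x ≤ 1 := by
  linarith [hρ.symm x, hρ.1.1 (f - x)]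

lemma apply_add_intCast_f (hρ : MinimalValid f ρ) (z : ℤ) : ρ (f + z) = 1 := by
  simpa [hρ.periodic, hρ.apply_zero] using hρ.symm f

end MinimalValid

lemma minimalValid_of_symm (hθ : Valid f θ) (hs : ∀ x, θ x + θ (f - x) = 1) :
    MinimalValid f θ := by
  refine ⟨hθ, fun ⟨σ, hσ, hle, hne⟩ => hne ?_⟩
  funext x
  linarith [hle x, hle (f - x), hs x, hσ.one_le_add x]

end Minimal

section PsetSubset

variable {f : ℝ} {θ ρ : ℝ → ℝ}

lemma wsum_eq_one_of_pset_subset (hP : Pset f θ ⊆ Pset f ρ) {y : ℝ →₀ ℕ}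
    (hy : wsum id y = f) (h : wsum θ y = 1) : wsum ρ y = 1 :=
  (hP ⟨feasible_of_wsum_eq hy, h⟩).2

lemma symm_of_pset_subset (hθ : MinimalValid f θ) (hP : Pset f θ ⊆ Pset f ρ) (x : ℝ) :
    ρ x + ρ (f - x) = 1 := by
  simpa using wsum_eq_one_of_pset_subset hP (y := .single x 1 + .single (f - x) 1)
    (by simp) (by simpa using hθ.symm x)

lemma minimalValid_of_pset_subset (hθ : MinimalValid f θ) (hρ : Valid f ρ)
    (hP : Pset f θ ⊆ Pset f ρ) : MinimalValid f ρ :=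
  minimalValid_of_symm hρ (symm_of_pset_subset hθ hP)

lemma eset_subset_of_pset_subset (hθ : MinimalValid f θ) (hP : Pset f θ ⊆ Pset f ρ) :
    Eset θ ⊆ Eset ρ := by
  rintro ⟨a, b⟩ (hab : θ a + θ b = θ (a + b))
  have h := wsum_eq_one_of_pset_subset hP
    (y := .single a 1 + .single b 1 + .single (f - (a + b)) 1) (by simp)
    (by simp only [wsum_add, wsum_single, Nat.cast_one, mul_one]; linarith [hθ.symm (a + b)])
  simp only [wsum_add, wsum_single, Nat.cast_one, mul_one] at h
  show ρ a + ρ b = ρ (a + b)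
  linarith [symm_of_pset_subset hθ hP (a + b)]

lemma eq_zero_of_pset_subset (hθ : MinimalValid f θ) (hρ : Valid f ρ)
    (hP : Pset f θ ⊆ Pset f ρ) {x : ℝ} (hx : θ x = 0) : ρ x = 0 := by
  have hn : ∀ n : ℕ, n * ρ x ≤ 1 := fun n => by
    have hθn : θ (n * x) = 0 := le_antisymm
      (by simpa [hx] using apply_nat_mul_le hθ.apply_zero hθ.subadditive n x) (hθ.1.1 _)
    have h := wsum_eq_one_of_pset_subset hP (y := .single x n + .single (f - n * x) 1)
      (by simp only [wsum_add, wsum_single, id_eq, Nat.cast_one, mul_one]; ring)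
      (by simp only [wsum_add, wsum_single, hx, zero_mul, Nat.cast_one, mul_one, zero_add]
          linarith [hθ.symm (n * x)])
    simp only [wsum_add, wsum_single, Nat.cast_one, mul_one] at h
    linarith [hρ.1 (f - n * x)]
  refine le_antisymm (le_of_not_gt fun hpos => ?_) (hρ.1 x)
  obtain ⟨n, hn'⟩ := exists_nat_gt (1 / ρ x)
  linarith [hn n, (div_lt_iff₀ hpos).1 hn']

end PsetSubset

def IsAffineOn (g : ℝ → ℝ) (s : Set ℝ) : Prop := ∃ A : ℝ →ᵃ[ℝ] ℝ, EqOn g A s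

section PiecewiseLinear

variable {g : ℝ → ℝ}

lemma exists_pos_forall_eq_of_discrete {B : Set ℝ} (hBc : IsClosed B)
    (hBd : ∀ x ∈ B, ∃ ε > (0 : ℝ), ∀ y ∈ B, |y - x| < ε → y = x) (x : ℝ) :
    ∃ ε > (0 : ℝ), ∀ y ∈ B, |y - x| < ε → y = x := by
  by_cases hx : x ∈ B
  · exact hBd x hx
  · obtain ⟨ε, hε, hball⟩ := Metric.isOpen_iff.1 hBc.isOpen_compl x hx
    exact ⟨ε, hε, fun y hy hyx => absurd hy (hball (by rwa [Metric.mem_ball, Real.dist_eq]))⟩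

lemma isAffineOn_Icc_of_Ioo_subset {B : Set ℝ}
    (hBaff : ∀ x ∉ B, ∃ a b : ℝ, ∀ z ∈ connectedComponentIn Bᶜ x, g z = a * z + b)
    (hg : Continuous g) {l h : ℝ} (hlh : l < h) (hB : Ioo l h ⊆ Bᶜ) :
    IsAffineOn g (Icc l h) := by
  have hm : (l + h) / 2 ∈ Ioo l h := ⟨by linarith, by linarith⟩
  obtain ⟨a, b, hab⟩ := hBaff _ (hB hm)
  let A : ℝ →ᵃ[ℝ] ℝ := a • AffineMap.id ℝ ℝ + AffineMap.const ℝ ℝ b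
  refine ⟨A, ?_⟩
  rw [← closure_Ioo hlh.ne]
  refine EqOn.closure (fun z hz => ?_) hg A.continuous_of_finiteDimensional
  simp [A, hab z (isPreconnected_Ioo.subset_connectedComponentIn hm hB hz)]

namespace ContPiecewiseLinear

lemma exists_isAffineOn (hg : ContPiecewiseLinear g) (x : ℝ) :
    ∃ d > 0, IsAffineOn g (Icc (x - d) x) ∧ IsAffineOn g (Icc x (x + d)) := by
  obtain ⟨⟨B, hBc, hBd, hBaff⟩, hcont⟩ := hg
  obtain ⟨d, hd, hdB⟩ := exists_pos_forall_eq_of_discrete hBc hBd x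
  have hfree : ∀ {l h}, x - d ≤ l → h ≤ x + d → x ∉ Ioo l h → Ioo l h ⊆ Bᶜ :=
    fun hl hh hx z hz hzB =>
      hx (hdB z hzB (abs_lt.2 ⟨by linarith [hz.1], by linarith [hz.2]⟩) ▸ hz)
  exact ⟨d, hd,
    isAffineOn_Icc_of_Ioo_subset hBaff hcont (by linarith)
      (hfree le_rfl (by linarith) fun h => h.2.false),
    isAffineOn_Icc_of_Ioo_subset hBaff hcont (by linarith)
      (hfree (by linarith) le_rfl fun h => h.1.false)⟩

lemma exists_finset_isAffineOn_cover (hg : ContPiecewiseLinear g) {K : Set ℝ}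
    (hK : IsCompact K) : ∃ S : Finset (ℝ × ℝ),
      (∀ p ∈ S, IsAffineOn g (Icc p.1 p.2)) ∧ ∀ x ∈ K, ∃ p ∈ S, x ∈ Icc p.1 p.2 := by
  choose d hd hleft hright using hg.exists_isAffineOn
  obtain ⟨t, -, hcover⟩ := hK.elim_nhds_subcover (fun x => Ioo (x - d x) (x + d x))
    fun x _ => Ioo_mem_nhds (by linarith [hd x]) (by linarith [hd x])
  classical
  refine ⟨t.image (fun x => (x - d x, x)) ∪ t.image (fun x => (x, x + d x)), ?_, fun y hy => ?_⟩
  · simp only [Finset.mem_union, Finset.mem_image]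
    rintro p (⟨x, -, rfl⟩ | ⟨x, -, rfl⟩)
    exacts [hleft x, hright x]
  · obtain ⟨x, hx, hyx⟩ := mem_iUnion₂.1 (hcover hy)
    rcases le_total y x with h | h
    · exact ⟨(x - d x, x), Finset.mem_union_left _ (Finset.mem_image_of_mem _ hx), hyx.1.le, h⟩
    · exact ⟨(x, x + d x), Finset.mem_union_right _ (Finset.mem_image_of_mem _ hx), h, hyx.2.le⟩

end ContPiecewiseLinear

lemma PiecewiseLinear.add_const_mul {g' : ℝ → ℝ} (hg : PiecewiseLinear g)
    (hg' : PiecewiseLinear g') (c : ℝ) : PiecewiseLinear fun x => g x + c * g' x := by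
  obtain ⟨B, hBc, hBd, hBaff⟩ := hg
  obtain ⟨B', hBc', hBd', hBaff'⟩ := hg'
  refine ⟨B ∪ B', hBc.union hBc', fun x _ => ?_, fun x hx => ?_⟩
  · obtain ⟨ε, hε, hεB⟩ := exists_pos_forall_eq_of_discrete hBc hBd x
    obtain ⟨ε', hε', hεB'⟩ := exists_pos_forall_eq_of_discrete hBc' hBd' x
    refine ⟨min ε ε', lt_min hε hε', fun y hy hyx => ?_⟩
    rcases hy with hy | hy
    exacts [hεB y hy (hyx.trans_le (min_le_left _ _)), hεB' y hy (hyx.trans_le (min_le_right _ _))]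
  · rw [mem_union, not_or] at hx
    obtain ⟨a, b, hab⟩ := hBaff x hx.1
    obtain ⟨a', b', hab'⟩ := hBaff' x hx.2
    refine ⟨a + c * a', b + c * b', fun z hz => ?_⟩
    dsimp only
    rw [hab z (connectedComponentIn_mono x (compl_subset_compl.2 subset_union_left) hz),
      hab' z (connectedComponentIn_mono x (compl_subset_compl.2 subset_union_right) hz)]
    ring

end PiecewiseLinear

lemma AffineMap.apply_add_add_apply_zero (A : ℝ →ᵃ[ℝ] ℝ) (u v : ℝ) :
    A u + A v = A (u + v) + A 0 := by
  have h₁ := A.map_vadd 0 u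
  have h₂ := A.map_vadd v u
  simp only [vadd_eq_add, add_zero] at h₁ h₂
  rw [h₁, h₂]
  ring

lemma le_div_mul_of_additive {ψ : ℝ → ℝ} {d : ℝ} (hd : 0 < d) (h1 : ∀ t, ψ t ≤ 1)
    (hadd : ∀ u v, 0 < u → 0 < v → u + v ≤ d → ψ (u + v) = ψ u + ψ v)
    {t : ℝ} (ht : 0 < t) : ψ t ≤ 2 / d * t := by
  rcases le_or_gt d t with hdt | htd
  · calc ψ t ≤ 1 := h1 t
      _ ≤ 2 / d * t := by rw [div_mul_eq_mul_div, le_div_iff₀ hd]; linarith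
  have hmul : ∀ n : ℕ, (n + 1) * t ≤ d → ψ ((n + 1) * t) = (n + 1) * ψ t := by
    intro n
    induction n with
    | zero => simp
    | succ n ih =>
      intro h
      push_cast at h ⊢
      rw [show ((n : ℝ) + 1 + 1) * t = (n + 1) * t + t by ring,
        hadd _ _ (by positivity) ht (by linarith), ih (by linarith)]
      ring
  -- `t` fits `k + 1 = ⌊d / t⌋` times into `d`
  obtain ⟨k, hk⟩ : ∃ k : ℕ, ⌊d / t⌋₊ = k + 1 :=
    Nat.exists_eq_add_one.2 (Nat.floor_pos.2 ((one_le_div ht).2 htd.le))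
  have hfit : (k + 1) * t ≤ d := by
    have := Nat.floor_le (div_nonneg hd.le ht.le)
    rw [hk, le_div_iff₀ ht] at this
    exact_mod_cast this
  have hover : d < 2 * (k + 1) * t := by
    have := Nat.lt_floor_add_one (d / t)
    rw [hk, div_lt_iff₀ ht] at this
    push_cast at this
    nlinarith
  have hk1 : (k + 1) * ψ t ≤ 1 := hmul k hfit ▸ h1 _
  rw [div_mul_eq_mul_div, le_div_iff₀ hd]
  nlinarith

lemma exists_le_mul_abs_of_pset_subset {f : ℝ} {θ ρ : ℝ → ℝ} (hθ : MinimalValid f θ)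
    (hθc : ContPiecewiseLinear θ) (hρ : Valid f ρ) (hP : Pset f θ ⊆ Pset f ρ) :
    ∃ L, 0 ≤ L ∧ ∀ t, ρ t ≤ L * |t| := by
  have hρm := minimalValid_of_pset_subset hθ hρ hP
  have hadd : ∀ s : Set ℝ, IsAffineOn θ s → ∀ u v, 0 ∈ s → u ∈ s → v ∈ s → u + v ∈ s →
      ρ (u + v) = ρ u + ρ v := by
    rintro s ⟨A, hA⟩ u v h0 hu hv huv
    have hE : (u, v) ∈ Eset θ := by
      show θ u + θ v = θ (u + v)
      have := hθ.apply_zero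
      rw [hA h0] at this
      rw [hA hu, hA hv, hA huv, A.apply_add_add_apply_zero, this, add_zero]
    exact (eset_subset_of_pset_subset hθ hP hE).symm
  obtain ⟨d, hd, hneg, hpos⟩ := hθc.exists_isAffineOn 0
  rw [zero_sub] at hneg
  rw [zero_add] at hpos
  have hright : ∀ t, 0 < t → ρ t ≤ 2 / d * t :=
    fun t => le_div_mul_of_additive hd hρm.le_one fun u v hu hv huv =>
      hadd _ hpos u v ⟨le_rfl, hd.le⟩ ⟨hu.le, by linarith⟩ ⟨hv.le, by linarith⟩ ⟨by linarith, huv⟩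
  have hleft : ∀ t, 0 < t → ρ (-t) ≤ 2 / d * t :=
    fun t => le_div_mul_of_additive (ψ := fun t => ρ (-t)) hd (fun _ => hρm.le_one _)
      fun u v hu hv huv => by
        show ρ (-(u + v)) = ρ (-u) + ρ (-v)
        rw [neg_add]
        exact hadd _ hneg (-u) (-v) ⟨by linarith, le_rfl⟩ ⟨by linarith, by linarith⟩
          ⟨by linarith, by linarith⟩ ⟨by linarith, by linarith⟩
  refine ⟨2 / d, by positivity, fun t => ?_⟩
  rcases lt_trichotomy t 0 with ht | rfl | ht
  · simpa [abs_of_neg ht] using hleft (-t) (by linarith)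
  · simp [hρm.apply_zero]
  · simpa [abs_of_pos ht] using hright t ht

lemma continuous_of_subadditive_of_le_mul_abs {ρ : ℝ → ℝ} {L : ℝ} (hL : 0 ≤ L)
    (hsub : ∀ a b, ρ (a + b) ≤ ρ a + ρ b) (hρ : ∀ t, ρ t ≤ L * |t|) : Continuous ρ := by
  refine (LipschitzWith.of_dist_le_mul (K := L.toNNReal) fun x y => ?_).continuous
  rw [Real.dist_eq, Real.dist_eq, Real.coe_toNNReal L hL, abs_le]
  have h₁ := hsub y (x - y)
  have h₂ := hsub x (y - x)
  rw [add_sub_cancel] at h₁ h₂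
  have h₃ := hρ (y - x)
  rw [abs_sub_comm] at h₃
  constructor <;> linarith [hρ (x - y)]

section Hoffman

variable {E : Type*} [SeminormedAddCommGroup E] [NormedSpace ℝ E]

lemma convex_setOf_exists_zero_near (A : E →ᵃ[ℝ] ℝ) {S : Set E} (hS : Convex ℝ S) (C : ℝ) :
    Convex ℝ {w | ∃ q ∈ S, A q = 0 ∧ ‖w - q‖ ≤ C * A w} := by
  rintro x ⟨q₁, hq₁, hA₁, hx⟩ y ⟨q₂, hq₂, hA₂, hy⟩ a b ha hb hab
  refine ⟨a • q₁ + b • q₂, hS hq₁ hq₂ ha hb hab,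
    by rw [Convex.combo_affine_apply hab, hA₁, hA₂]; simp, ?_⟩
  calc ‖a • x + b • y - (a • q₁ + b • q₂)‖ = ‖a • (x - q₁) + b • (y - q₂)‖ := by
        rw [smul_sub, smul_sub]; abel_nf
    _ ≤ a * ‖x - q₁‖ + b * ‖y - q₂‖ := (norm_add_le _ _).trans_eq <| by
        rw [norm_smul, norm_smul, Real.norm_of_nonneg ha, Real.norm_of_nonneg hb]
    _ ≤ a * (C * A x) + b * (C * A y) := by gcongr
    _ = C * A (a • x + b • y) := by
        rw [Convex.combo_affine_apply hab]; simp only [smul_eq_mul]; ring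

/-- A Hoffman-type error bound for an affine function that is nonnegative on a polytope. -/
theorem eventually_one_le_or_exists_zero_near (V : Finset E) (A : E →ᵃ[ℝ] ℝ)
    (hV : ∀ v ∈ V, 0 ≤ A v) : ∀ᶠ C in atTop, ∀ w ∈ convexHull ℝ (V : Set E),
      1 ≤ C * A w ∨ ∃ q ∈ convexHull ℝ (V : Set E), A q = 0 ∧ ‖w - q‖ ≤ C * A w := by
  have hvert : ∀ᶠ C in atTop, ∀ v ∈ V,
      A v = 0 ∨ (1 ≤ C * A v ∧ ∀ u ∈ V, ‖v - u‖ ≤ C * A v) := by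
    refine (eventually_all_finset V).2 fun v hv => ?_
    rcases (hV v hv).eq_or_lt with h | h
    · exact Eventually.of_forall fun _ => Or.inl h.symm
    · have ht : Tendsto (fun C => C * A v) atTop atTop := tendsto_id.atTop_mul_const h
      filter_upwards [ht.eventually_ge_atTop 1,
        (eventually_all_finset V).2 fun u _ => ht.eventually_ge_atTop ‖v - u‖] with C h₁ h₂
      exact Or.inr ⟨h₁, h₂⟩
  filter_upwards [hvert] with C hC w hw
  by_cases hz : ∃ v₀ ∈ V, A v₀ = 0
  · obtain ⟨v₀, hv₀, hA₀⟩ := hz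
    refine Or.inr (convexHull_min (fun v hv => ?_)
      (convex_setOf_exists_zero_near A (convex_convexHull ℝ _) C) hw)
    rcases hC v hv with h | ⟨-, h⟩
    · exact ⟨v, subset_convexHull ℝ _ hv, h, by simp [h]⟩
    · exact ⟨v₀, subset_convexHull ℝ _ hv₀, hA₀, h v₀ hv₀⟩
  · push Not at hz
    exact Or.inl (convexHull_min (fun v hv => ((hC v hv).resolve_left (hz v hv)).1)
      ((convex_Ici 1).affine_preimage (C • A)) hw)

end Hoffman

section Cell

variable {E : Type*} [AddCommGroup E] [Module ℝ E]

lemma add_smul_mem_segment (p d : E) {s t u : ℝ} (hst : s ≤ t) (htu : t ≤ u) :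
    p + t • d ∈ segment ℝ (p + s • d) (p + u • d) := by
  have hmem : t ∈ segment ℝ s u := by rw [segment_eq_Icc (hst.trans htu)]; exact ⟨hst, htu⟩
  have := image_segment ℝ (AffineMap.lineMap p (p + d)) s u ▸ mem_image_of_mem _ hmem
  simpa [AffineMap.lineMap_apply, add_comm] using this

def cell (I J K : ℝ × ℝ) : Set (ℝ × ℝ) :=
  {w | w.1 ∈ Icc I.1 I.2 ∧ w.2 ∈ Icc J.1 J.2 ∧ w.1 + w.2 ∈ Icc K.1 K.2}

noncomputable def cellVertices (I J K : ℝ × ℝ) : Finset (ℝ × ℝ) :=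
  {(I.1, J.1), (I.1, J.2), (I.2, J.1), (I.2, J.2),
    (I.1, K.1 - I.1), (I.1, K.2 - I.1), (I.2, K.1 - I.2), (I.2, K.2 - I.2),
    (K.1 - J.1, J.1), (K.1 - J.2, J.2), (K.2 - J.1, J.1), (K.2 - J.2, J.2)}

variable {I J K : ℝ × ℝ}

lemma convex_cell : Convex ℝ (cell I J K) :=
  ((convex_Icc I.1 I.2).linear_preimage (LinearMap.fst ℝ ℝ ℝ)).inter
    (((convex_Icc J.1 J.2).linear_preimage (LinearMap.snd ℝ ℝ ℝ)).inter
      ((convex_Icc K.1 K.2).linear_preimage (LinearMap.fst ℝ ℝ ℝ + LinearMap.snd ℝ ℝ ℝ)))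

lemma mk_mem_cell_iff {x y : ℝ} : (x, y) ∈ cell I J K ↔
    I.1 ≤ x ∧ x ≤ I.2 ∧ J.1 ≤ y ∧ y ≤ J.2 ∧ K.1 ≤ x + y ∧ x + y ≤ K.2 := by
  simp [cell, and_assoc]

lemma mem_convexHull_of_fst_eq {x y : ℝ} (hx : x = I.1 ∨ x = I.2) (hc : (x, y) ∈ cell I J K) :
    (x, y) ∈ convexHull ℝ (↑(cellVertices I J K) ∩ cell I J K) := by
  obtain ⟨hx₁, hx₂, hy₁, hy₂, hs₁, hs₂⟩ := mk_mem_cell_iff.1 hc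
  have hlo : (x, max J.1 (K.1 - x)) ∈
      (cellVertices I J K : Set (ℝ × ℝ)) ∩ cell I J K := by
    refine ⟨?_, mk_mem_cell_iff.2 ?_⟩
    · rcases max_choice J.1 (K.1 - x) with h | h <;> rw [h] <;>
        rcases hx with rfl | rfl <;> simp [cellVertices]
    · have := max_le hy₁ (by linarith : K.1 - x ≤ y)
      refine ⟨hx₁, hx₂, ?_, ?_, ?_, ?_⟩ <;>
        linarith [le_max_left J.1 (K.1 - x), le_max_right J.1 (K.1 - x)]
  have hhi : (x, min J.2 (K.2 - x)) ∈
      (cellVertices I J K : Set (ℝ × ℝ)) ∩ cell I J K := by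
    refine ⟨?_, mk_mem_cell_iff.2 ?_⟩
    · rcases min_choice J.2 (K.2 - x) with h | h <;> rw [h] <;>
        rcases hx with rfl | rfl <;> simp [cellVertices]
    · have := le_min hy₂ (by linarith : y ≤ K.2 - x)
      refine ⟨hx₁, hx₂, ?_, ?_, ?_, ?_⟩ <;>
        linarith [min_le_left J.2 (K.2 - x), min_le_right J.2 (K.2 - x)]
  have hseg := add_smul_mem_segment (x, (0 : ℝ)) (0, 1)
    (max_le hy₁ (by linarith : K.1 - x ≤ y)) (le_min hy₂ (by linarith : y ≤ K.2 - x))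
  simp only [Prod.smul_mk, smul_eq_mul, mul_zero, mul_one, Prod.mk_add_mk, add_zero,
    zero_add] at hseg
  exact segment_subset_convexHull hlo hhi hseg

lemma mem_convexHull_of_add_eq {s y : ℝ} (hs : s = K.1 ∨ s = K.2)
    (hc : (s - y, y) ∈ cell I J K) :
    (s - y, y) ∈ convexHull ℝ (↑(cellVertices I J K) ∩ cell I J K) := by
  obtain ⟨hx₁, hx₂, hy₁, hy₂, hs₁, hs₂⟩ := mk_mem_cell_iff.1 hc
  have hlo : (s - max J.1 (s - I.2), max J.1 (s - I.2)) ∈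
      (cellVertices I J K : Set (ℝ × ℝ)) ∩ cell I J K := by
    refine ⟨?_, mk_mem_cell_iff.2 ?_⟩
    · rcases max_choice J.1 (s - I.2) with h | h <;> rw [h] <;>
        rcases hs with rfl | rfl <;> simp [cellVertices]
    · have := max_le hy₁ (by linarith : s - I.2 ≤ y)
      refine ⟨?_, ?_, ?_, ?_, ?_, ?_⟩ <;>
        linarith [le_max_left J.1 (s - I.2), le_max_right J.1 (s - I.2)]
  have hhi : (s - min J.2 (s - I.1), min J.2 (s - I.1)) ∈
      (cellVertices I J K : Set (ℝ × ℝ)) ∩ cell I J K := by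
    refine ⟨?_, mk_mem_cell_iff.2 ?_⟩
    · rcases min_choice J.2 (s - I.1) with h | h <;> rw [h] <;>
        rcases hs with rfl | rfl <;> simp [cellVertices]
    · have := le_min hy₂ (by linarith : y ≤ s - I.1)
      refine ⟨?_, ?_, ?_, ?_, ?_, ?_⟩ <;>
        linarith [min_le_left J.2 (s - I.1), min_le_right J.2 (s - I.1)]
  have hseg := add_smul_mem_segment (s, (0 : ℝ)) (-1, 1)
    (max_le hy₁ (by linarith : s - I.2 ≤ y)) (le_min hy₂ (by linarith : y ≤ s - I.1))
  simp only [Prod.smul_mk, smul_eq_mul, mul_neg, mul_one, Prod.mk_add_mk, ← sub_eq_add_neg,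
    zero_add] at hseg
  exact segment_subset_convexHull hlo hhi hseg

lemma convexHull_cellVertices_inter_cell :
    convexHull ℝ (↑(cellVertices I J K) ∩ cell I J K) = cell I J K := by
  refine (convexHull_min inter_subset_right convex_cell).antisymm ?_
  rintro ⟨a, b⟩ hc
  obtain ⟨ha₁, ha₂, hb₁, hb₂, hs₁, hs₂⟩ := mk_mem_cell_iff.1 hc
  -- `(a, b)` lies on a horizontal chord of the cell whose ends lie on its edges
  have hlo : (max I.1 (K.1 - b), b) ∈ convexHull ℝ (↑(cellVertices I J K) ∩ cell I J K) := by
    have hmem : (max I.1 (K.1 - b), b) ∈ cell I J K := by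
      have := max_le ha₁ (by linarith : K.1 - b ≤ a)
      refine mk_mem_cell_iff.2 ⟨?_, ?_, hb₁, hb₂, ?_, ?_⟩ <;>
        linarith [le_max_left I.1 (K.1 - b), le_max_right I.1 (K.1 - b)]
    rcases max_choice I.1 (K.1 - b) with h | h <;> rw [h] at hmem ⊢
    exacts [mem_convexHull_of_fst_eq (Or.inl rfl) hmem,
      mem_convexHull_of_add_eq (Or.inl rfl) hmem]
  have hhi : (min I.2 (K.2 - b), b) ∈ convexHull ℝ (↑(cellVertices I J K) ∩ cell I J K) := by
    have hmem : (min I.2 (K.2 - b), b) ∈ cell I J K := by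
      have := le_min ha₂ (by linarith : a ≤ K.2 - b)
      refine mk_mem_cell_iff.2 ⟨?_, ?_, hb₁, hb₂, ?_, ?_⟩ <;>
        linarith [min_le_left I.2 (K.2 - b), min_le_right I.2 (K.2 - b)]
    rcases min_choice I.2 (K.2 - b) with h | h <;> rw [h] at hmem ⊢
    exacts [mem_convexHull_of_fst_eq (Or.inr rfl) hmem,
      mem_convexHull_of_add_eq (Or.inr rfl) hmem]
  have hseg := add_smul_mem_segment ((0 : ℝ), b) (1, 0)
    (max_le ha₁ (by linarith : K.1 - b ≤ a)) (le_min ha₂ (by linarith : a ≤ K.2 - b))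
  simp only [Prod.smul_mk, smul_eq_mul, mul_zero, mul_one, Prod.mk_add_mk, add_zero,
    zero_add] at hseg
  exact (convex_convexHull ℝ _).segment_subset hlo hhi hseg

lemma exists_affineMap_eqOn_cell {θ : ℝ → ℝ} (hI : IsAffineOn θ (Icc I.1 I.2))
    (hJ : IsAffineOn θ (Icc J.1 J.2)) (hK : IsAffineOn θ (Icc K.1 K.2)) :
    ∃ A : ℝ × ℝ →ᵃ[ℝ] ℝ, EqOn (fun w => delta θ w.1 w.2) A (cell I J K) := by
  obtain ⟨AI, hAI⟩ := hI
  obtain ⟨AJ, hAJ⟩ := hJ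
  obtain ⟨AK, hAK⟩ := hK
  let fst : ℝ × ℝ →ᵃ[ℝ] ℝ := (LinearMap.fst ℝ ℝ ℝ).toAffineMap
  let snd : ℝ × ℝ →ᵃ[ℝ] ℝ := (LinearMap.snd ℝ ℝ ℝ).toAffineMap
  refine ⟨AI.comp fst + AJ.comp snd - AK.comp (fst + snd), fun w ⟨h₁, h₂, h₃⟩ => ?_⟩
  simp [fst, snd, delta, hAI h₁, hAJ h₂, hAK h₃]

end Cell

lemma eventually_le_mul_of_exists {α : Type*} {s : Set α} {F G : α → ℝ}
    (hG : ∀ x ∈ s, 0 ≤ G x) (h : ∃ C, ∀ x ∈ s, F x ≤ C * G x) :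
    ∀ᶠ C in atTop, ∀ x ∈ s, F x ≤ C * G x := by
  obtain ⟨C₀, hC₀⟩ := h
  filter_upwards [eventually_ge_atTop C₀] with C hC x hx
  exact (hC₀ x hx).trans (mul_le_mul_of_nonneg_right hC (hG x hx))

lemma delta_le_delta_add {ρ : ℝ → ℝ} (hsub : ∀ a b, ρ (a + b) ≤ ρ a + ρ b) (a b a' b' : ℝ) :
    delta ρ a b ≤ delta ρ a' b' + ρ (a - a') + ρ (b - b') + ρ (a' + b' - (a + b)) := by
  have h₁ := hsub a' (a - a')
  have h₂ := hsub b' (b - b')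
  have h₃ := hsub (a + b) (a' + b' - (a + b))
  simp only [add_sub_cancel] at h₁ h₂ h₃
  simp only [delta]
  linarith

section Comparison

variable {f : ℝ} {θ ρ : ℝ → ℝ}

lemma exists_le_mul_on_Icc (hθ : ∀ x, 0 ≤ θ x) (hρ : MinimalValid f ρ)
    (hzero : ∀ x, θ x = 0 → ρ x = 0) {L : ℝ} (hL0 : 0 ≤ L) (hL : ∀ t, ρ t ≤ L * |t|)
    {l h : ℝ} (hA : IsAffineOn θ (Icc l h)) : ∃ C, ∀ x ∈ Icc l h, ρ x ≤ C * θ x := by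
  rcases lt_or_ge h l with hhl | hlh
  · exact ⟨0, fun x hx => absurd (hx.1.trans hx.2) hhl.not_ge⟩
  obtain ⟨A, hA⟩ := hA
  have hhull : convexHull ℝ (({l, h} : Finset ℝ) : Set ℝ) = Icc l h := by
    rw [Finset.coe_pair, convexHull_pair, segment_eq_Icc hlh]
  have hV : ∀ v ∈ ({l, h} : Finset ℝ), 0 ≤ A v := fun v hv => by
    rw [← hA (hhull ▸ subset_convexHull ℝ _ hv)]
    exact hθ v
  obtain ⟨C, hC, hC0⟩ :=
    ((eventually_one_le_or_exists_zero_near _ A hV).and (eventually_ge_atTop 0)).exists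
  rw [hhull] at hC
  refine ⟨(1 + L) * C, fun x hx => ?_⟩
  have hθx : 0 ≤ C * θ x := mul_nonneg hC0 (hθ x)
  rcases hC x hx with h₁ | ⟨q, hq, hAq, hxq⟩
  · rw [← hA hx] at h₁
    nlinarith [hρ.le_one x]
  · rw [← hA hq] at hAq
    have := hρ.subadditive q (x - q)
    rw [add_sub_cancel, hzero q hAq, zero_add] at this
    rw [← hA hx, Real.norm_eq_abs] at hxq
    nlinarith [hL (x - q)]

lemma eventually_le_mul_of_pset_subset (hθ : MinimalValid f θ) (hθc : ContPiecewiseLinear θ)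
    (hρ : Valid f ρ) (hP : Pset f θ ⊆ Pset f ρ) : ∀ᶠ C in atTop, ∀ x, ρ x ≤ C * θ x := by
  have hρm := minimalValid_of_pset_subset hθ hρ hP
  obtain ⟨L, hL0, hL⟩ := exists_le_mul_abs_of_pset_subset hθ hθc hρ hP
  obtain ⟨S, hS, hcover⟩ := hθc.exists_finset_isAffineOn_cover (isCompact_Icc (a := 0) (b := 1))
  have hcells := (eventually_all_finset S).2 fun p hp =>
    eventually_le_mul_of_exists (fun x _ => hθ.1.1 x)
      (exists_le_mul_on_Icc hθ.1.1 hρm (fun _ => eq_zero_of_pset_subset hθ hρ hP) hL0 hL (hS p hp))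
  filter_upwards [hcells] with C hC x
  obtain ⟨p, hp, hxp⟩ := hcover (Int.fract x) ⟨Int.fract_nonneg x, (Int.fract_lt_one x).le⟩
  simpa only [hρm.apply_fract, hθ.apply_fract] using hC p hp _ hxp

lemma exists_delta_le_mul_on_cell (hθ : ∀ a b, θ (a + b) ≤ θ a + θ b) (hρ : MinimalValid f ρ)
    (hE : Eset θ ⊆ Eset ρ) {L : ℝ} (hL0 : 0 ≤ L) (hL : ∀ t, ρ t ≤ L * |t|) {I J K : ℝ × ℝ}
    (hI : IsAffineOn θ (Icc I.1 I.2)) (hJ : IsAffineOn θ (Icc J.1 J.2))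
    (hK : IsAffineOn θ (Icc K.1 K.2)) :
    ∃ C, ∀ w ∈ cell I J K, delta ρ w.1 w.2 ≤ C * delta θ w.1 w.2 := by
  obtain ⟨A, hA⟩ := exists_affineMap_eqOn_cell hI hJ hK
  classical
  set V := (cellVertices I J K).filter (· ∈ cell I J K)
  have hV : ∀ v ∈ V, 0 ≤ A v := fun v hv => by
    rw [← hA (Finset.mem_filter.1 hv).2]
    exact delta_nonneg hθ _ _
  obtain ⟨C, hC, hC0⟩ :=
    ((eventually_one_le_or_exists_zero_near V A hV).and (eventually_ge_atTop 0)).exists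
  have hhull : convexHull ℝ (V : Set (ℝ × ℝ)) = cell I J K := by
    rw [Finset.coe_filter]
    exact convexHull_cellVertices_inter_cell
  rw [hhull] at hC
  refine ⟨(2 + 4 * L) * C, fun w hw => ?_⟩
  have hAw : delta θ w.1 w.2 = A w := hA hw
  have hδθ : 0 ≤ C * A w := mul_nonneg hC0 (hAw ▸ delta_nonneg hθ _ _)
  rw [hAw]
  rcases hC w hw with h₁ | ⟨q, hq, hAq, hwq⟩
  · have : delta ρ w.1 w.2 ≤ 2 := by
      simp only [delta]
      linarith [hρ.le_one w.1, hρ.le_one w.2, hρ.1.1 (w.1 + w.2)]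
    nlinarith
  · have hq0 : delta ρ q.1 q.2 = 0 := mem_Eset_iff.1 (hE (mem_Eset_iff.2 ((hA hq).trans hAq)))
    have h₁ : |w.1 - q.1| ≤ ‖w - q‖ := norm_fst_le (w - q)
    have h₂ : |w.2 - q.2| ≤ ‖w - q‖ := norm_snd_le (w - q)
    have h₃ : |q.1 + q.2 - (w.1 + w.2)| ≤ |w.1 - q.1| + |w.2 - q.2| := by
      rw [abs_sub_comm]
      exact (abs_add_le _ _).trans_eq' (by ring_nf)
    have := delta_le_delta_add hρ.subadditive w.1 w.2 q.1 q.2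
    nlinarith [hL (w.1 - q.1), hL (w.2 - q.2), hL (q.1 + q.2 - (w.1 + w.2))]

lemma eventually_delta_le_mul_of_pset_subset (hθ : MinimalValid f θ)
    (hθc : ContPiecewiseLinear θ) (hρ : Valid f ρ) (hP : Pset f θ ⊆ Pset f ρ) :
    ∀ᶠ C in atTop, ∀ a b, delta ρ a b ≤ C * delta θ a b := by
  have hρm := minimalValid_of_pset_subset hθ hρ hP
  obtain ⟨L, hL0, hL⟩ := exists_le_mul_abs_of_pset_subset hθ hθc hρ hP
  obtain ⟨S, hS, hcover⟩ := hθc.exists_finset_isAffineOn_cover (isCompact_Icc (a := 0) (b := 2))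
  have hcells := (eventually_all_finset (S ×ˢ S ×ˢ S)).2 fun p hp => by
    simp only [Finset.mem_product] at hp
    exact eventually_le_mul_of_exists (fun w _ => delta_nonneg hθ.subadditive _ _)
      (exists_delta_le_mul_on_cell hθ.subadditive hρm (eset_subset_of_pset_subset hθ hP) hL0 hL
        (hS _ hp.1) (hS _ hp.2.1) (hS _ hp.2.2))
  filter_upwards [hcells] with C hC a b
  rw [← hρm.delta_fract, ← hθ.delta_fract]
  have ha := Int.fract_nonneg a
  have ha' := Int.fract_lt_one a
  have hb := Int.fract_nonneg b
  have hb' := Int.fract_lt_one b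
  obtain ⟨I, hI, haI⟩ := hcover (Int.fract a) ⟨ha, by linarith⟩
  obtain ⟨J, hJ, hbJ⟩ := hcover (Int.fract b) ⟨hb, by linarith⟩
  obtain ⟨K, hK, habK⟩ := hcover (Int.fract a + Int.fract b) ⟨by linarith, by linarith⟩
  exact hC (I, J, K) (by simp [hI, hJ, hK]) (Int.fract a, Int.fract b) ⟨haI, hbJ, habK⟩

theorem exists_valid_extrapolation (hθ : MinimalValid f θ) (hθc : ContPiecewiseLinear θ)
    (hρ : Valid f ρ) (hP : Pset f θ ⊆ Pset f ρ) :
    ∃ ε, 0 < ε ∧ ε ≤ 1 ∧ Valid f fun x => (1 + ε) * θ x - ε * ρ x := by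
  have hρm := minimalValid_of_pset_subset hθ hρ hP
  obtain ⟨C, ⟨hle, hδ⟩, hC1⟩ := (((eventually_le_mul_of_pset_subset hθ hθc hρ hP).and
    (eventually_delta_le_mul_of_pset_subset hθ hθc hρ hP)).and (eventually_ge_atTop 1)).exists
  have hC0 : 0 < C := by linarith
  refine ⟨C⁻¹, inv_pos.2 hC0, inv_le_one_of_one_le₀ hC1,
    valid_of_subadditive (fun x => ?_) ?_ (fun a b => ?_) fun z => ?_⟩
  · have : C⁻¹ * ρ x ≤ θ x := by rw [inv_mul_le_iff₀ hC0]; exact hle x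
    nlinarith [hθ.1.1 x, inv_pos.2 hC0]
  · simp [hθ.apply_zero, hρm.apply_zero]
  · have : C⁻¹ * delta ρ a b ≤ delta θ a b := by rw [inv_mul_le_iff₀ hC0]; exact hδ a b
    have := delta_nonneg hθ.subadditive a b
    simp only [delta] at *
    nlinarith [inv_pos.2 hC0]
  · simp [hθ.apply_add_intCast_f, hρm.apply_add_intCast_f]

end Comparison

section Extreme

variable {f : ℝ} {π πt : ℝ → ℝ}

lemma Valid.combo {π₁ π₂ : ℝ → ℝ} (h₁ : Valid f π₁) (h₂ : Valid f π₂) {a b : ℝ} (ha : 0 ≤ a)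
    (hb : 0 ≤ b) (hab : a + b = 1) : Valid f fun x => a * π₁ x + b * π₂ x := by
  refine ⟨fun x => add_nonneg (mul_nonneg ha (h₁.1 x)) (mul_nonneg hb (h₂.1 x)), fun y hy => ?_⟩
  change 1 ≤ wsum _ y
  rw [wsum_linear]
  nlinarith [h₁.one_le_wsum hy, h₂.one_le_wsum hy]

lemma IsFacet.isWeakFacet (h : IsFacet f π) : IsWeakFacet f π :=
  ⟨h.1, fun ρ hρ hP => by rw [h.2 ρ hρ hP]⟩

lemma IsFacet.extremeFunc (h : IsFacet f π) : ExtremeFunc f π := by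
  refine ⟨h.1, fun π₁ π₂ h₁ h₂ havg => ?_⟩
  have hP : Pset f π ⊆ Pset f π₁ := fun y ⟨hy, hy1⟩ => by
    have hsum : wsum π y = 2⁻¹ * wsum π₁ y + 2⁻¹ * wsum π₂ y := by
      rw [← wsum_linear]
      exact congrArg₂ _ (funext fun x => by rw [havg]; ring) rfl
    have : wsum π y = 1 := hy1
    exact ⟨hy, show wsum π₁ y = 1 by linarith [h₁.one_le_wsum hy, h₂.one_le_wsum hy]⟩
  have e₁ := h.2 π₁ h₁ hP
  exact ⟨e₁, funext fun x => by linarith [havg x, congrFun e₁ x]⟩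

lemma ExtremeFunc.isFacet (hE : ExtremeFunc f π) (hπ : MinimalValid f π)
    (hc : ContPiecewiseLinear π) : IsFacet f π := by
  refine ⟨hπ.1, fun ρ hρ hP => funext fun x => ?_⟩
  obtain ⟨ε, hε, hε1, hval⟩ := exists_valid_extrapolation hπ hc hρ hP
  have := congrFun (hE.2 _ _ (hπ.1.combo hρ (a := 1 - ε) (by linarith) hε.le (by ring)) hval
    fun x => by ring).1 x
  have : ε * (ρ x - π x) = 0 := by linarith
  linarith [(mul_eq_zero.1 this).resolve_left hε.ne']

lemma minimalValid_of_average {π₁ π₂ : ℝ → ℝ} (hπ : MinimalValid f π) (h₁ : Valid f π₁)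
    (h₂ : Valid f π₂) (havg : ∀ x, π x = (π₁ x + π₂ x) / 2) : MinimalValid f π₁ :=
  minimalValid_of_symm h₁ fun x => by
    linarith [havg x, havg (f - x), hπ.symm x, h₁.one_le_add x, h₂.one_le_add x]

lemma exists_effPerturb_of_not_extremeFunc (hπ : MinimalValid f π) (hE : ¬ ExtremeFunc f π) :
    ∃ πt : ℝ → ℝ, πt ≠ 0 ∧ EffPerturb f π πt := by
  simp only [ExtremeFunc, hπ.1, true_and, not_forall] at hE
  obtain ⟨π₁, π₂, h₁, h₂, havg, hne⟩ := hE
  have hne₁ : π₁ ≠ π := fun h => hne ⟨h, funext fun x => by linarith [havg x, congrFun h x]⟩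
  refine ⟨π₁ - π, sub_ne_zero.2 hne₁, 1, one_pos, ?_, ?_⟩
  · convert minimalValid_of_average hπ h₁ h₂ havg using 1
    funext x
    simp
  · convert minimalValid_of_average hπ h₂ h₁ (fun x => by rw [havg x]; ring) using 1
    funext x
    simp only [Pi.sub_apply, one_mul]
    linarith [havg x]

namespace EffPerturb

lemma pset_subset (h : EffPerturb f π πt) (t : ℝ) :
    Pset f π ⊆ Pset f fun x => π x + t * πt x := by
  obtain ⟨ε, hε, hplus, hminus⟩ := h
  rintro y ⟨hy, hy1 : wsum π y = 1⟩
  have eplus := hplus.1.one_le_wsum hy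
  have eminus := hminus.1.one_le_wsum hy
  rw [wsum_add_mul, hy1] at eplus
  rw [show (fun x => π x - ε * πt x) = fun x => π x + (-ε) * πt x by funext; ring,
    wsum_add_mul, hy1] at eminus
  have : wsum πt y = 0 := by nlinarith
  exact ⟨hy, show wsum _ y = 1 by rw [wsum_add_mul, hy1, this, mul_zero, add_zero]⟩

lemma add_apply_sub (h : EffPerturb f π πt) (hπ : MinimalValid f π) (x : ℝ) :
    πt x + πt (f - x) = 0 := by
  have := (h.pset_subset 1 (show Finsupp.single x 1 + .single (f - x) 1 ∈ Pset f π from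
    ⟨feasible_of_wsum_eq (by simp), show wsum π _ = 1 by simpa using hπ.symm x⟩)).2
  change wsum _ _ = 1 at this
  simp only [wsum_add, wsum_single, Nat.cast_one, mul_one] at this
  linarith [hπ.symm x]

lemma continuous (h : EffPerturb f π πt) (hπ : MinimalValid f π) (hc : ContPiecewiseLinear π) :
    Continuous πt := by
  have hP := h.pset_subset
  obtain ⟨ε, hε, hplus, -⟩ := h
  obtain ⟨L, hL0, hL⟩ := exists_le_mul_abs_of_pset_subset hπ hc hplus.1 (hP ε)
  have := ((continuous_of_subadditive_of_le_mul_abs hL0 hplus.subadditive hL).sub hc.2).div_const ε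
  convert this using 1
  funext x
  simp only [Pi.sub_apply, add_sub_cancel_left, mul_div_cancel_left₀ _ hε.ne']

end EffPerturb

lemma isClosed_setOf_valid_add_mul (π πt : ℝ → ℝ) :
    IsClosed {t : ℝ | Valid f fun x => π x + t * πt x} := by
  have : {t : ℝ | Valid f fun x => π x + t * πt x} = (⋂ x, {t | 0 ≤ π x + t * πt x}) ∩
      ⋂ y ∈ {y | Feasible f y}, {t | 1 ≤ wsum π y + t * wsum πt y} := by
    ext t
    simp only [Valid, mem_ofPred_eq, mem_inter_iff, mem_iInter]
    exact and_congr Iff.rfl (forall₂_congr fun y _ => by rw [← wsum_add_mul]; rfl)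
  rw [this]
  exact (isClosed_iInter fun x => isClosed_le continuous_const (by fun_prop)).inter
    (isClosed_biInter fun y _ => isClosed_le continuous_const (by fun_prop))

lemma exists_max_valid_add_mul {ε x₀ : ℝ} (hx₀ : πt x₀ < 0)
    (hε : Valid f fun x => π x + ε * πt x) :
    ∃ t, ε ≤ t ∧ (Valid f fun x => π x + t * πt x) ∧
      ∀ s, t < s → ¬ Valid f fun x => π x + s * πt x := by
  set T := {t | ε ≤ t ∧ Valid f fun x => π x + t * πt x}
  have hT : IsClosed T := isClosed_Ici.inter (isClosed_setOf_valid_add_mul π πt)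
  have hbdd : BddAbove T := ⟨π x₀ / -πt x₀, fun t ht => by
    have := ht.2.1 x₀
    rw [le_div_iff₀ (by linarith)]
    linarith⟩
  have hmem := hT.csSup_mem ⟨ε, le_rfl, hε⟩ hbdd
  exact ⟨sSup T, hmem.1, hmem.2,
    fun s hs hv => (le_csSup hbdd ⟨hmem.1.trans hs.le, hv⟩).not_gt hs⟩

lemma exists_pset_ne_of_not_extremeFunc (hπ : MinimalValid f π) (hc : ContPiecewiseLinear π)
    (hprop : (∃ πt : ℝ → ℝ, πt ≠ 0 ∧ EffPerturb f π πt) →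
      ∃ πt : ℝ → ℝ, πt ≠ 0 ∧ PiecewiseLinear πt ∧ EffPerturb f π πt)
    (hE : ¬ ExtremeFunc f π) :
    ∃ ρ, Valid f ρ ∧ Pset f π ⊆ Pset f ρ ∧ Pset f π ≠ Pset f ρ := by
  obtain ⟨πt, hne, hPL, heff⟩ := hprop (exists_effPerturb_of_not_extremeFunc hπ hE)
  obtain ⟨x₀, hx₀⟩ : ∃ x₀, πt x₀ < 0 := by
    obtain ⟨x, hx : πt x ≠ 0⟩ := Function.ne_iff.1 hne
    rcases hx.lt_or_gt with h | h
    · exact ⟨x, h⟩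
    · exact ⟨f - x, by linarith [heff.add_apply_sub hπ x]⟩
  obtain ⟨ε, hε, hplus, -⟩ := id heff
  -- push `π` along `πt` as far as validity allows
  obtain ⟨t, hεt, hvalid, hmax⟩ := exists_max_valid_add_mul hx₀ hplus.1
  set θ := fun x => π x + t * πt x
  have hθ : MinimalValid f θ := minimalValid_of_symm hvalid fun x => by
    linear_combination hπ.symm x + t * heff.add_apply_sub hπ x
  have hθc : ContPiecewiseLinear θ :=
    ⟨hc.1.add_const_mul hPL t, hc.2.add (continuous_const.mul (heff.continuous hπ hc))⟩
  refine ⟨θ, hvalid, heff.pset_subset t, fun heq => ?_⟩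
  obtain ⟨δ, hδ, -, hδv⟩ := exists_valid_extrapolation hθ hθc hπ.1 heq.symm.subset
  refine hmax ((1 + δ) * t) (by nlinarith) ?_
  convert hδv using 2 with x
  simp only [θ]
  ring

end Extreme

theorem stmt8_general (f : ℝ) (π : ℝ → ℝ)
    (hπ : MinimalValid f π) (hcpl : ContPiecewiseLinear π)
    (hprop : (∃ πt : ℝ → ℝ, πt ≠ 0 ∧ EffPerturb f π πt) →
      ∃ πt : ℝ → ℝ, πt ≠ 0 ∧ PiecewiseLinear πt ∧ EffPerturb f π πt) :
    (ExtremeFunc f π ↔ IsFacet f π) ∧ (IsFacet f π ↔ IsWeakFacet f π) := by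
  have hEF : ExtremeFunc f π ↔ IsFacet f π :=
    ⟨fun hE => hE.isFacet hπ hcpl, IsFacet.extremeFunc⟩
  refine ⟨hEF, IsFacet.isWeakFacet, fun hW => hEF.1 (by_contra fun hE => ?_)⟩
  obtain ⟨ρ, hρ, hP, hne⟩ := exists_pset_ne_of_not_extremeFunc hπ hcpl hprop hE
  exact hne (hW.2 ρ hρ hP)

theorem stmt8 (f : ℝ) (hf : f ∈ Set.Ioo (0 : ℝ) 1) (π : ℝ → ℝ)
    (hπ : MinimalValid f π) (hcpl : ContPiecewiseLinear π)
    (hprop : (∃ πt : ℝ → ℝ, πt ≠ 0 ∧ EffPerturb f π πt) →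
      ∃ πt : ℝ → ℝ, πt ≠ 0 ∧ PiecewiseLinear πt ∧ EffPerturb f π πt) :
    (ExtremeFunc f π ↔ IsFacet f π) ∧ (IsFacet f π ↔ IsWeakFacet f π) :=
  stmt8_general f π hπ hcpl hprop
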